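/- arXiv:1201.4449 — 2 statements merged into one kernel-verified Lean document; each statement's English description precedes it below -/
import Mathlib

section
/- In the reachability-safety game constructed from two ATSs K and K', every alternating simulation relation S from K to K' satisfies: for each (w,w') ∈ S, the vertex ⟨w,w'⟩ is winning for player 2 for the safety objective Safe(F). Together with the converse inclusion, the player-2 winning set on state pairs equals the maximum alternating simulation relation. -/
/-- A labeled alternating transition system (ATS). -/
structure ATS (Obs W A1 A2 : Type*) where
  init : W
  P1 : W → Set A1
  P2 : W → Set A2
  P1_nonempty : ∀ w, (P1 w).Nonempty
  P2_nonempty : ∀ w, (P2 w).Nonempty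
  L : W → Obs
  δ : W → A1 → A2 → W

variable {Obs W A1 A2 W' A1' A2' : Type*}

/-- `Succ(w,a) = { δ(w,a,b) | b ∈ P2(w) }`. -/
def SuccSet (K : ATS Obs W A1 A2) (w : W) (a : A1) : Set W :=
  (fun b => K.δ w a b) '' K.P2 w

/-- `Succ(K) = { Succ(w,a) | w ∈ W, a ∈ P1(w) }`. -/
def SuccSets (K : ATS Obs W A1 A2) : Set (Set W) :=
  {T | ∃ w, ∃ a ∈ K.P1 w, T = SuccSet K w a}

/-- `S` is an alternating simulation from `K` to `K'`. -/
def IsAltSim (K : ATS Obs W A1 A2) (K' : ATS Obs W' A1' A2')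
    (S : W → W' → Prop) : Prop :=
  ∀ w w', S w w' →
    K.L w = K'.L w' ∧
    ∀ a ∈ K.P1 w, ∃ a' ∈ K'.P1 w', ∀ b' ∈ K'.P2 w', ∃ b ∈ K.P2 w,
      S (K.δ w a b) (K'.δ w' a' b')

/-- Vertices of the game graph for alternating simulation:
`pair w w'` is `⟨w,w'⟩`; `spair T T'` is `⟨T,T'⟩`; `mid T w' t` is
`⟨T,w',#⟩` when `t = false` and `⟨T,w',$⟩` when `t = true`. -/
inductive GVtx (W W' : Type*) where
  | pair : W → W' → GVtx W W'
  | spair : Set W → Set W' → GVtx W W'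
  | mid : Set W → W' → Bool → GVtx W W'

/-- Edges `E = E1 ∪ E2 ∪ E3 ∪ E4` of the game graph. -/
inductive GEdge (K : ATS Obs W A1 A2) (K' : ATS Obs W' A1' A2') :
    GVtx W W' → GVtx W W' → Prop
  | e1 {w : W} {w' : W'} {a : A1} (ha : a ∈ K.P1 w) :
      GEdge K K' (.pair w w') (.mid (SuccSet K w a) w' false)
  | e2 {T : Set W} {w' : W'} {a' : A1'} (hT : T ∈ SuccSets K)
      (ha' : a' ∈ K'.P1 w') :
      GEdge K K' (.mid T w' false) (.spair T (SuccSet K' w' a'))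
  | e3 {T : Set W} {T' : Set W'} {r' : W'} (hT : T ∈ SuccSets K)
      (hT' : T' ∈ SuccSets K') (hr' : r' ∈ T') :
      GEdge K K' (.spair T T') (.mid T r' true)
  | e4 {T : Set W} {r' : W'} {r : W} (hT : T ∈ SuccSets K) (hr : r ∈ T) :
      GEdge K K' (.mid T r' true) (.pair r r')

/-- Player-2 vertices of the game. -/
def isV2 : GVtx W W' → Prop
  | .mid _ _ _ => True
  | _ => False

/-- Player 2 wins the safety objective `Safe(F)` from `v0`, where the unsafe
set is `T = { ⟨w,w'⟩ | L(w) ≠ L'(w') }`: player 2 has a (history-dependent)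
strategy, following edges whenever possible, such that every play from `v0`
consistent with it never visits a vertex `⟨w,w'⟩` with `L(w) ≠ L'(w')`. -/
def Player2WinsSafe (K : ATS Obs W A1 A2) (K' : ATS Obs W' A1' A2')
    (v0 : GVtx W W') : Prop :=
  ∃ σ : List (GVtx W W') → GVtx W W' → GVtx W W',
    (∀ h v, (∃ u, GEdge K K' v u) → GEdge K K' v (σ h v)) ∧
    ∀ f : ℕ → GVtx W W', f 0 = v0 →
      (∀ n, GEdge K K' (f n) (f (n + 1))) →
      (∀ n, isV2 (f n) → f (n + 1) = σ (List.ofFn (fun i : Fin n => f i)) (f n)) →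
      ∀ n w w', f n = .pair w w' → K.L w = K'.L w'


/-!
An alternating simulation `S` is an invariant that player 2 can maintain: at `⟨w,w'⟩` it is
`S w w'`, at `⟨Succ(w,a),w',#⟩` it is `S w w'` (so player 2 answers with the `a'` of the
simulation clause), at `⟨T,T'⟩` every `r' ∈ T'` has an `S`-partner in `T`, and at `⟨T,r',$⟩`
player 2 moves to such a partner. Since `S` respects labels, the unsafe set is never reached.

Conversely, the player-2 winning region is closed under player-1 moves and contains some
successor of each of its player-2 vertices (shift a winning strategy by one move). Following
one round `⟨w,w'⟩ → ⟨Succ(w,a),w',#⟩ → ⟨T,T'⟩ → ⟨T,r',$⟩ → ⟨r,r'⟩` inside the region yields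
exactly the clauses of an alternating simulation. Labels agree at winning pairs because every
vertex entered by an edge has a successor, so plays consistent with a strategy exist.
-/

section Plays

variable {V : Type*}

/-- The history and current vertex after `n` steps when every move is made by `σ`. -/
def strategyPlay (σ : List V → V → V) (v₀ : V) : ℕ → List V × V
  | 0 => ([], v₀)
  | n + 1 =>
      let p := strategyPlay σ v₀ n
      (p.1 ++ [p.2], σ p.1 p.2)

theorem strategyPlay_fst (σ : List V → V → V) (v₀ : V) (n : ℕ) :
    (strategyPlay σ v₀ n).1 = List.ofFn fun i : Fin n => (strategyPlay σ v₀ i).2 := by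
  induction n with
  | zero => rfl
  | succ n ih =>
      rw [List.ofFn_succ']
      simp only [strategyPlay, ih, List.concat_eq_append]
      rfl

theorem exists_play_of_strategy (E : V → V → Prop) (σ : List V → V → V)
    (hσ : ∀ h v, (∃ u, E v u) → E v (σ h v)) (hE : ∀ v u, E v u → ∃ x, E u x)
    {v₀ : V} (hv₀ : ∃ u, E v₀ u) :
    ∃ f : ℕ → V, f 0 = v₀ ∧ (∀ n, E (f n) (f (n + 1))) ∧
      ∀ n, f (n + 1) = σ (List.ofFn fun i : Fin n => f i) (f n) := by
  set f : ℕ → V := fun n => (strategyPlay σ v₀ n).2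
  have hstep : ∀ n, f (n + 1) = σ (List.ofFn fun i : Fin n => f i) (f n) := fun n =>
    congrArg (σ · _) (strategyPlay_fst σ v₀ n)
  have hedge : ∀ n, E (f n) (f (n + 1)) := by
    intro n
    induction n with
    | zero => exact hstep 0 ▸ hσ _ _ hv₀
    | succ n ih => exact hstep (n + 1) ▸ hσ _ _ (hE _ _ ih)
  exact ⟨f, rfl, hedge, hstep⟩

end Plays

section Game

variable {K : ATS Obs W A1 A2} {K' : ATS Obs W' A1' A2'}

theorem SuccSet.mem_succSets {w : W} {a : A1} (ha : a ∈ K.P1 w) :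
    SuccSet K w a ∈ SuccSets K :=
  ⟨w, a, ha, rfl⟩

theorem nonempty_of_mem_succSets {T : Set W} (hT : T ∈ SuccSets K) : T.Nonempty := by
  obtain ⟨w, a, -, rfl⟩ := hT
  exact (K.P2_nonempty w).image _

theorem GEdge.exists_from_pair (w : W) (w' : W') : ∃ u, GEdge K K' (.pair w w') u :=
  ⟨_, .e1 (K.P1_nonempty w).some_mem⟩

theorem GEdge.exists_from_target {v u : GVtx W W'} (he : GEdge K K' v u) :
    ∃ x, GEdge K K' u x := by
  cases he with
  | e1 ha => exact ⟨_, .e2 (SuccSet.mem_succSets ha) (K'.P1_nonempty _).some_mem⟩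
  | e2 hT ha' =>
      have hT' := SuccSet.mem_succSets (K := K') ha'
      exact ⟨_, .e3 hT hT' (nonempty_of_mem_succSets hT').some_mem⟩
  | e3 hT _ _ => exact ⟨_, .e4 hT (nonempty_of_mem_succSets hT).some_mem⟩
  | e4 _ _ => exact GEdge.exists_from_pair _ _

variable (K K') in
/-- `Player2WinsSafe K K' v₀` unfolds to `∃ σ, (σ follows edges) ∧ IsWinningFrom K K' σ v₀`. -/
def IsWinningFrom (σ : List (GVtx W W') → GVtx W W' → GVtx W W') (v₀ : GVtx W W') : Prop :=
  ∀ f : ℕ → GVtx W W', f 0 = v₀ →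
    (∀ n, GEdge K K' (f n) (f (n + 1))) →
    (∀ n, isV2 (f n) → f (n + 1) = σ (List.ofFn (fun i : Fin n => f i)) (f n)) →
    ∀ n w w', f n = .pair w w' → K.L w = K'.L w'

theorem IsWinningFrom.shift {σ : List (GVtx W W') → GVtx W W' → GVtx W W'} {v u : GVtx W W'}
    (hwin : IsWinningFrom K K' σ v) (he : GEdge K K' v u) (hu : isV2 v → u = σ [] v) :
    IsWinningFrom K K' (fun h => σ (v :: h)) u := by
  intro g hg₀ hgE hgσ n w w' hgn
  let f : ℕ → GVtx W W' := fun
    | 0 => v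
    | n + 1 => g n
  have hhist : ∀ n, (List.ofFn fun i : Fin (n + 1) => f i) = v :: List.ofFn fun i : Fin n => g i :=
    fun _ => List.ofFn_succ
  refine hwin f rfl (fun n => ?_) (fun n hn => ?_) (n + 1) w w' hgn
  · cases n with
    | zero =>
        show GEdge K K' v (g 0)
        exact hg₀ ▸ he
    | succ n => exact hgE n
  · cases n with
    | zero => exact hg₀.trans (hu hn)
    | succ n => exact (hgσ n hn).trans (congrArg (σ · _) (hhist n).symm)

theorem player2WinsSafe_of_invariant (I : GVtx W W' → Prop)
    (hsafe : ∀ w w', I (.pair w w') → K.L w = K'.L w')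
    (hP1 : ∀ v u, I v → ¬ isV2 v → GEdge K K' v u → I u)
    (hP2 : ∀ v, I v → isV2 v → ∃ u, GEdge K K' v u ∧ I u)
    {v₀ : GVtx W W'} (hv₀ : I v₀) : Player2WinsSafe K K' v₀ := by
  classical
  have hkeep : ∀ v, (∃ u, GEdge K K' v u) → ∃ u, GEdge K K' v u ∧ (I v → I u) := by
    rintro v ⟨u, hu⟩
    by_cases hIv : I v
    · by_cases hv : isV2 v
      · obtain ⟨u', hu', hIu'⟩ := hP2 v hIv hv
        exact ⟨u', hu', fun _ => hIu'⟩
      · exact ⟨u, hu, fun _ => hP1 v u hIv hv hu⟩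
    · exact ⟨u, hu, fun h => absurd h hIv⟩
  let move : GVtx W W' → GVtx W W' := fun v =>
    if h : ∃ u, GEdge K K' v u ∧ (I v → I u) then h.choose else v
  have hmove : ∀ v, (∃ u, GEdge K K' v u) → GEdge K K' v (move v) ∧ (I v → I (move v)) :=
    fun v hex => by
      simp only [move, dif_pos (hkeep v hex)]
      exact (hkeep v hex).choose_spec
  refine ⟨fun _ => move, fun _ v hex => (hmove v hex).1, fun f hf₀ hfE hfσ => ?_⟩
  have hI : ∀ n, I (f n) := by
    intro n
    induction n with
    | zero => exact hf₀ ▸ hv₀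
    | succ n ih =>
        by_cases hv : isV2 (f n)
        · exact hfσ n hv ▸ (hmove _ ⟨_, hfE n⟩).2 ih
        · exact hP1 _ _ ih hv (hfE n)
  exact fun n w w' hfn => hsafe w w' (hfn ▸ hI n)

variable (K) in
def simInvariant (S : W → W' → Prop) : GVtx W W' → Prop
  | .pair w w' => S w w'
  | .mid T w' false => ∃ w, ∃ a ∈ K.P1 w, T = SuccSet K w a ∧ S w w'
  | .spair T T' => ∀ r' ∈ T', ∃ r ∈ T, S r r'
  | .mid T r' true => T ∈ SuccSets K ∧ ∃ r ∈ T, S r r'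

theorem simInvariant_of_edge {S : W → W' → Prop} {v u : GVtx W W'}
    (hI : simInvariant K S v) (hv : ¬ isV2 v) (he : GEdge K K' v u) : simInvariant K S u := by
  cases he with
  | e1 ha => exact ⟨_, _, ha, rfl, hI⟩
  | e3 hT _ hr' => exact ⟨hT, hI _ hr'⟩
  | e2 _ _ | e4 _ _ => exact absurd trivial hv

theorem IsAltSim.exists_simInvariant_edge {S : W → W' → Prop} (hS : IsAltSim K K' S)
    {v : GVtx W W'} (hI : simInvariant K S v) (hv : isV2 v) :
    ∃ u, GEdge K K' v u ∧ simInvariant K S u := by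
  match v, hI, hv with
  | .mid _ w' false, ⟨w, a, ha, rfl, hww'⟩, _ =>
      obtain ⟨a', ha', hmatch⟩ := (hS w w' hww').2 a ha
      refine ⟨_, .e2 (SuccSet.mem_succSets ha) ha', ?_⟩
      rintro _ ⟨b', hb', rfl⟩
      obtain ⟨b, hb, hS'⟩ := hmatch b' hb'
      exact ⟨_, ⟨b, hb, rfl⟩, hS'⟩
  | .mid _ _ true, ⟨hT, r, hr, hrr'⟩, _ => exact ⟨_, .e4 hT hr, hrr'⟩

theorem IsAltSim.player2WinsSafe {S : W → W' → Prop} (hS : IsAltSim K K' S) {w : W} {w' : W'}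
    (hww' : S w w') : Player2WinsSafe K K' (.pair w w') :=
  player2WinsSafe_of_invariant (simInvariant K S) (fun w w' h => (hS w w' h).1)
    (fun _ _ hI hv he => simInvariant_of_edge hI hv he)
    (fun _ hI hv => hS.exists_simInvariant_edge hI hv) hww'

theorem Player2WinsSafe.of_edge {v u : GVtx W W'} (hwin : Player2WinsSafe K K' v)
    (hv : ¬ isV2 v) (he : GEdge K K' v u) : Player2WinsSafe K K' u := by
  obtain ⟨σ, hσ, hσwin⟩ := hwin
  exact ⟨fun h => σ (v :: h), fun _ _ => hσ _ _, IsWinningFrom.shift hσwin he fun h => absurd h hv⟩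

theorem Player2WinsSafe.exists_edge {v : GVtx W W'} (hwin : Player2WinsSafe K K' v)
    (hex : ∃ u, GEdge K K' v u) : ∃ u, GEdge K K' v u ∧ Player2WinsSafe K K' u := by
  obtain ⟨σ, hσ, hσwin⟩ := hwin
  exact ⟨σ [] v, hσ _ _ hex, fun h => σ (v :: h), fun _ _ => hσ _ _,
    IsWinningFrom.shift hσwin (hσ _ _ hex) fun _ => rfl⟩

theorem Player2WinsSafe.label_eq {w : W} {w' : W'} (hwin : Player2WinsSafe K K' (.pair w w')) :
    K.L w = K'.L w' := by
  obtain ⟨σ, hσ, hσwin⟩ := hwin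
  obtain ⟨f, hf₀, hfE, hfσ⟩ := exists_play_of_strategy (GEdge K K') σ hσ
    (fun _ _ => GEdge.exists_from_target) (GEdge.exists_from_pair w w')
  exact hσwin f hf₀ hfE (fun n _ => hfσ n) 0 w w' hf₀

variable (K K') in
theorem isAltSim_player2WinsSafe :
    IsAltSim K K' fun w w' => Player2WinsSafe K K' (.pair w w') := by
  intro w w' hwin
  refine ⟨hwin.label_eq, fun a ha => ?_⟩
  have hT := SuccSet.mem_succSets ha
  obtain ⟨_, hE₁, hwin₁⟩ := (hwin.of_edge id (.e1 ha)).exists_edge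
    ⟨_, .e2 hT (K'.P1_nonempty w').some_mem⟩
  cases hE₁ with
  | e2 _ ha' =>
    refine ⟨_, ha', fun b' hb' => ?_⟩
    have hwin₂ := hwin₁.of_edge id (.e3 hT (SuccSet.mem_succSets ha') ⟨b', hb', rfl⟩)
    obtain ⟨_, hE₂, hwin₃⟩ :=
      hwin₂.exists_edge ⟨_, .e4 hT (nonempty_of_mem_succSets hT).some_mem⟩
    cases hE₂ with
    | e4 _ hr =>
      obtain ⟨b, hb, rfl⟩ := hr
      exact ⟨b, hb, hwin₃⟩

end Game

/-- Every alternating simulation `S` satisfies: each `(w,w') ∈ S` gives a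
player-2 winning vertex `⟨w,w'⟩` for the safety objective; together with the
converse inclusion, the player-2 winning set on state pairs equals the maximum
alternating simulation relation. -/
theorem altSim_subset_win2_and_win2_eq_max
    (K : ATS Obs W A1 A2) (K' : ATS Obs W' A1' A2') :
    (∀ S : W → W' → Prop, IsAltSim K K' S →
      ∀ w w', S w w' → Player2WinsSafe K K' (.pair w w')) ∧
    (∀ M : W → W' → Prop,
      (IsAltSim K K' M ∧ ∀ S, IsAltSim K K' S → ∀ w w', S w w' → M w w') →
      ∀ w w', M w w' ↔ Player2WinsSafe K K' (.pair w w')) :=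
  ⟨fun _ hS _ _ => hS.player2WinsSafe, fun _ ⟨hM, hmax⟩ w w' =>
    ⟨hM.player2WinsSafe, hmax _ (isAltSim_player2WinsSafe K K') w w'⟩⟩
end

section
/- Consider the parity game constructed for fair alternating simulation. If a play starting from ⟨w,w'⟩ does not satisfy the parity objective and never reaches the sink vertex ⌢, then the corresponding run in K is fair while the corresponding run in K' is not fair. -/
variable {Obs W A1 A2 W' A1' A2' : Type*}

/-- Vertices of the parity game for fair alternating simulation:
`pair w w'` is `⟨w,w'⟩` (only used with `L(w) = L'(w')`); `spair T T'` is
`⟨T,T'⟩`; `mid T w' t` is `⟨T,w',#⟩` for `t = false` and `⟨T,w',$⟩` for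
`t = true`; `frown` is the absorbing sink `⌢`. -/
inductive FVtx (W W' : Type*) where
  | pair : W → W' → FVtx W W'
  | spair : Set W → Set W' → FVtx W W'
  | mid : Set W → W' → Bool → FVtx W W'
  | frown : FVtx W W'

/-- Edges `E = E1 ∪ E2 ∪ E3 ∪ E4¹ ∪ E4² ∪ E5` of the parity game. -/
inductive FEdge (K : ATS Obs W A1 A2) (K' : ATS Obs W' A1' A2') :
    FVtx W W' → FVtx W W' → Prop
  | e1 {w : W} {w' : W'} {a : A1} (hL : K.L w = K'.L w') (ha : a ∈ K.P1 w) :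
      FEdge K K' (.pair w w') (.mid (SuccSet K w a) w' false)
  | e2 {T : Set W} {w' : W'} {a' : A1'} (hT : T ∈ SuccSets K)
      (ha' : a' ∈ K'.P1 w') :
      FEdge K K' (.mid T w' false) (.spair T (SuccSet K' w' a'))
  | e3 {T : Set W} {T' : Set W'} {r' : W'} (hT : T ∈ SuccSets K)
      (hT' : T' ∈ SuccSets K') (hr' : r' ∈ T') :
      FEdge K K' (.spair T T') (.mid T r' true)
  | e4a {T : Set W} {r' : W'} {r : W} (hT : T ∈ SuccSets K) (hr : r ∈ T)
      (hL : K.L r = K'.L r') :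
      FEdge K K' (.mid T r' true) (.pair r r')
  | e4b {T : Set W} {r' : W'} (hT : T ∈ SuccSets K)
      (hno : ∀ r ∈ T, K.L r ≠ K'.L r') :
      FEdge K K' (.mid T r' true) .frown
  | e5 : FEdge K K' .frown .frown

open Classical in
/-- The three-priority priority function: priority `0` on `(W × F') ∩ V1`,
priority `1` on `((F × W' \ W × F') ∩ V1) ∪ {⌢}`, priority `2` elsewhere. -/
noncomputable def prio (F : Set W) (F' : Set W') : FVtx W W' → ℕ
  | .pair w w' => if w' ∈ F' then 0 else if w ∈ F then 1 else 2
  | .frown => 1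
  | _ => 2

/-- Vertices occurring infinitely often in the play `f`. -/
def InfinitelyOften {α : Type*} (f : ℕ → α) : Set α :=
  {v | ∀ N, ∃ n ≥ N, f n = v}

/-- The parity objective for priority function `p`: the minimum priority
visited infinitely often is even. -/
def ParitySat {α : Type*} (p : α → ℕ) (f : ℕ → α) : Prop :=
  (InfinitelyOften f ∩ p ⁻¹' {0}).Nonempty ∨ InfinitelyOften f ∩ p ⁻¹' {1} = ∅

/-- A run is fair iff it visits the fairness set infinitely often. -/
def FairRun {X : Type*} (F : Set X) (ρ : ℕ → X) : Prop :=
  ∀ N, ∃ n ≥ N, ρ n ∈ F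

/-- The play `⟨w₀,w₀'⟩, ⟨T₀,w₀',#⟩, ⟨T₀,T₀'⟩, ⟨T₀,w₁',$⟩, ⟨w₁,w₁'⟩, …`
determined by the runs `w̄`, `w̄'` and the successor-set sequences. -/
def playOf (wseq : ℕ → W) (w'seq : ℕ → W') (Tseq : ℕ → Set W)
    (T'seq : ℕ → Set W') : ℕ → FVtx W W' := fun n =>
  match n % 4 with
  | 0 => .pair (wseq (n / 4)) (w'seq (n / 4))
  | 1 => .mid (Tseq (n / 4)) (w'seq (n / 4)) false
  | 2 => .spair (Tseq (n / 4)) (T'seq (n / 4))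
  | _ => .mid (Tseq (n / 4)) (w'seq (n / 4 + 1)) true

open Filter

section Recurrence

variable {X : Type*} {S : Set X} {ρ : ℕ → X}

theorem mem_infinitelyOften_iff_frequently {x : X} :
    x ∈ InfinitelyOften ρ ↔ ∃ᶠ n in atTop, ρ n = x :=
  frequently_atTop.symm

theorem fairRun_iff_frequently : FairRun S ρ ↔ ∃ᶠ n in atTop, ρ n ∈ S :=
  frequently_atTop.symm

theorem FairRun.of_mem_infinitelyOften {x : X} (hx : x ∈ InfinitelyOften ρ) (hxS : x ∈ S) :
    FairRun S ρ :=
  fun N => (hx N).imp fun _ ⟨hn, hρ⟩ => ⟨hn, hρ ▸ hxS⟩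

theorem FairRun.exists_mem_infinitelyOften [Finite X] (h : FairRun S ρ) :
    ∃ x ∈ S, x ∈ InfinitelyOften ρ := by
  by_contra! hnone
  have hleave : ∀ᶠ n in atTop, ∀ x : X, x ∈ S → ρ n ≠ x :=
    eventually_all.2 fun x => eventually_imp_distrib_left.2 fun hx =>
      not_frequently.1 (mt mem_infinitelyOften_iff_frequently.2 (hnone x hx))
  obtain ⟨n, hnS, hn⟩ := ((fairRun_iff_frequently.1 h).and_eventually hleave).exists
  exact hn _ hnS rfl

end Recurrence

section Play

variable (wseq : ℕ → W) (w'seq : ℕ → W') (Tseq : ℕ → Set W) (T'seq : ℕ → Set W')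

theorem playOf_four_mul (k : ℕ) :
    playOf wseq w'seq Tseq T'seq (4 * k) = .pair (wseq k) (w'seq k) := by
  simp [playOf]

variable {wseq w'seq Tseq T'seq}

theorem playOf_eq_pair_iff {n : ℕ} {w : W} {w' : W'} :
    playOf wseq w'seq Tseq T'seq n = .pair w w' ↔ ∃ k, n = 4 * k ∧ wseq k = w ∧ w'seq k = w' := by
  constructor
  · intro h
    obtain ⟨k, r, hr, rfl⟩ : ∃ k r, r < 4 ∧ n = 4 * k + r := ⟨n / 4, n % 4, n.mod_lt (by norm_num),
      (Nat.div_add_mod n 4).symm⟩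
    interval_cases r <;> simp_all [playOf, Nat.add_mod, Nat.add_div]
  · rintro ⟨k, rfl, rfl, rfl⟩
    exact playOf_four_mul wseq w'seq Tseq T'seq k

theorem pair_mem_infinitelyOften_playOf_iff {w : W} {w' : W'} :
    FVtx.pair w w' ∈ InfinitelyOften (playOf wseq w'seq Tseq T'seq) ↔
      (w, w') ∈ InfinitelyOften fun k => (wseq k, w'seq k) := by
  constructor
  · intro h N
    obtain ⟨n, hn, hpair⟩ := h (4 * N)
    obtain ⟨k, rfl, rfl, rfl⟩ := playOf_eq_pair_iff.1 hpair
    exact ⟨k, by omega, rfl⟩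
  · intro h N
    obtain ⟨k, hk, hpair⟩ := h N
    simp only [Prod.mk.injEq] at hpair
    exact ⟨4 * k, by omega, playOf_eq_pair_iff.2 ⟨k, rfl, hpair⟩⟩

end Play

section Priority

variable {F : Set W} {F' : Set W'} {v : FVtx W W'}

theorem prio_eq_zero_iff : prio F F' v = 0 ↔ ∃ w w', v = .pair w w' ∧ w' ∈ F' := by
  cases v with
  | pair w w' => simp only [prio]; split_ifs <;> simp_all
  | _ => simp [prio]

theorem prio_eq_one_iff :
    prio F F' v = 1 ↔ v = .frown ∨ ∃ w w', v = .pair w w' ∧ w ∈ F ∧ w' ∉ F' := by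
  cases v with
  | pair w w' => simp only [prio]; split_ifs <;> simp_all
  | _ => simp [prio]

end Priority

theorem nonParity_play_correspondence_general
    [Fintype W] [Fintype W']
    (F : Set W) (F' : Set W')
    (wseq : ℕ → W) (w'seq : ℕ → W') (Tseq : ℕ → Set W) (T'seq : ℕ → Set W')
    (hnofrown : ∀ n, playOf wseq w'seq Tseq T'seq n ≠ FVtx.frown)
    (hpar : ¬ ParitySat (prio F F') (playOf wseq w'seq Tseq T'seq)) :
    FairRun F wseq ∧ ¬ FairRun F' w'seq := by
  rw [ParitySat, not_or, Set.not_nonempty_iff_eq_empty, ← Ne, ← Set.nonempty_iff_ne_empty] at hpar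
  obtain ⟨hno_zero, v, hv, hv_one⟩ := hpar
  obtain rfl | ⟨w, w', rfl, hwF, -⟩ := prio_eq_one_iff.1 hv_one
  · obtain ⟨n, -, hn⟩ := hv 0
    exact absurd hn (hnofrown n)
  refine ⟨FairRun.of_mem_infinitelyOften (S := {p : W × W' | p.1 ∈ F})
    (pair_mem_infinitelyOften_playOf_iff.1 hv) hwF, fun hF' => ?_⟩
  obtain ⟨⟨u, u'⟩, hu', hu_inf⟩ := FairRun.exists_mem_infinitelyOften
    (S := {p : W × W' | p.2 ∈ F'}) (ρ := fun k => (wseq k, w'seq k)) hF'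
  exact hno_zero.subset
    ⟨pair_mem_infinitelyOften_playOf_iff.2 hu_inf, prio_eq_zero_iff.2 ⟨u, u', rfl, hu'⟩⟩

/-- If a play of the fair-alternating-simulation parity game does not satisfy
the parity objective and never reaches the sink vertex `⌢`, then the
corresponding run in `K` is fair while the corresponding run in `K'` is not fair. -/
theorem nonParity_play_correspondence
    [Fintype W] [Fintype W']
    (K : ATS Obs W A1 A2) (K' : ATS Obs W' A1' A2')
    (F : Set W) (F' : Set W')
    (wseq : ℕ → W) (w'seq : ℕ → W') (Tseq : ℕ → Set W) (T'seq : ℕ → Set W')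
    (hplay : ∀ n, FEdge K K' (playOf wseq w'seq Tseq T'seq n)
      (playOf wseq w'seq Tseq T'seq (n + 1)))
    (hnofrown : ∀ n, playOf wseq w'seq Tseq T'seq n ≠ FVtx.frown)
    (hpar : ¬ ParitySat (prio F F') (playOf wseq w'seq Tseq T'seq)) :
    FairRun F wseq ∧ ¬ FairRun F' w'seq :=
  nonParity_play_correspondence_general F F' wseq w'seq Tseq T'seq hnofrown hpar
end
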